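/- For every α with 0<α<1/2 there exists a quantum finite state transducer that computes the relation R₄ = {(0^m 1^n a, 4^l) : a∈{2,3}, (a=2 → l=m) and (a=3 → l=n)} ⊆ {0,1,2,3}*×{4}* with isolated cutpoint α (so the cutpoint can be taken arbitrarily close to 1/2). -/

import Mathlib

/-!  Quantum finite state transducers (qfst), following
Freivalds & Winter, "Quantum Finite State Transducers". -/

section QFSTdefs

variable {Q Γ₁ Γ₂ : Type*}

/-- A quantum finite state transducer: a finite state set `Q`, input alphabet
`Γ₁` (with implicit begin/end markers `‡`,`$`), output alphabet `Γ₂`, unitary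
transition matrices for every letter and for the two markers, output
functions, an initial state, and disjoint sets of accepting and rejecting
states.  The end-marker unitary carries no amplitude from non-halting states
to outside `acc ∪ rej`. -/
structure QFST (Q Γ₁ Γ₂ : Type*) [Fintype Q] [DecidableEq Q] where
  V : Γ₁ → Matrix Q Q ℂ
  Vbeg : Matrix Q Q ℂ
  Vend : Matrix Q Q ℂ
  out : Γ₁ → Q → List Γ₂
  outBeg : Q → List Γ₂
  outEnd : Q → List Γ₂
  init : Q
  acc : Finset Q
  rej : Finset Q
  acc_disj_rej : Disjoint acc rej
  unitary : ∀ a, V a ∈ Matrix.unitaryGroup Q ℂ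
  unitaryBeg : Vbeg ∈ Matrix.unitaryGroup Q ℂ
  unitaryEnd : Vend ∈ Matrix.unitaryGroup Q ℂ
  endHalts : ∀ q, q ∉ acc → q ∉ rej → ∀ p, p ∉ acc → p ∉ rej → Vend q p = 0

variable [DecidableEq Γ₂] [Fintype Q] [DecidableEq Q]

/-- One computation step, before measurement: starting from the superposition
`ψ` over (non-halting state, output tape content) pairs, every state `q`
writes the word `s.2 q` on the output tape and the unitary `s.1` is applied;
this is the resulting amplitude of the pair `(p, w)`. -/
noncomputable def qStepAmp (s : Matrix Q Q ℂ × (Q → List Γ₂)) (ψ : Q → List Γ₂ → ℂ)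
    (p : Q) (w : List Γ₂) : ℂ :=
  ∑ q, (if s.2 q <:+ w then ψ q (w.take (w.length - (s.2 q).length)) else 0) * s.1 q p

/-- Accumulated acceptance probabilities of a qfst computation: after each
step the orthogonal measurement (non-halting ⊕ accepting ⊕ rejecting) is
performed; amplitude on accepting states is collected (per output word `w`)
into the accumulator `P`, and only the non-halting part of the superposition
survives to the next step. -/
noncomputable def qAccAux (acc non : Finset Q) :
    List (Matrix Q Q ℂ × (Q → List Γ₂)) → (Q → List Γ₂ → ℂ) → (List Γ₂ → ℝ) →
      List Γ₂ → ℝ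
  | [], _, P => P
  | s :: rest, ψ, P =>
      qAccAux acc non rest (fun p w => if p ∈ non then qStepAmp s ψ p w else 0)
        (fun w => P w + ∑ p ∈ acc, ‖qStepAmp s ψ p w‖ ^ 2)

/-- The list of computation steps on input `‡ v $`. -/
def QFST.steps (T : QFST Q Γ₁ Γ₂) (v : List Γ₁) :
    List (Matrix Q Q ℂ × (Q → List Γ₂)) :=
  (T.Vbeg, T.outBeg) :: (v.map fun a => (T.V a, T.out a)) ++ [(T.Vend, T.outEnd)]

/-- `T.prob v w` : the accumulated probability that on input `‡ v $` the
computation accepts, having written exactly `w` on the output tape. -/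
noncomputable def QFST.prob (T : QFST Q Γ₁ Γ₂) (v : List Γ₁) (w : List Γ₂) : ℝ :=
  qAccAux T.acc (Finset.univ \ (T.acc ∪ T.rej)) (T.steps v)
    (fun q u => if q = T.init ∧ u = ([] : List Γ₂) then 1 else 0) (fun _ => 0) w

/-- `T` computes the relation `R` with probability `α`. -/
def QFST.Computes (T : QFST Q Γ₁ Γ₂) (R : Set (List Γ₁ × List Γ₂)) (α : ℝ) : Prop :=
  ∀ v w, ((v, w) ∈ R → α ≤ T.prob v w) ∧ ((v, w) ∉ R → T.prob v w ≤ 1 - α)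

/-- `T` computes the relation `R` with isolated cutpoint `α`. -/
def QFST.ComputesCutpoint (T : QFST Q Γ₁ Γ₂) (R : Set (List Γ₁ × List Γ₂)) (α : ℝ) : Prop :=
  ∃ ε > 0, ∀ v w, ((v, w) ∈ R → α + ε ≤ T.prob v w) ∧ ((v, w) ∉ R → T.prob v w ≤ α - ε)

end QFSTdefs

/-- The relation
`R₄ = {(0^m 1^n a, 4^l) : a ∈ {2,3}, (a = 2 → l = m) ∧ (a = 3 → l = n)}`
`⊆ {0,1,2,3}* × {4}*` (the output symbol `4` being represented inside
`Fin 5`). -/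
def R₄ : Set (List (Fin 4) × List (Fin 5)) :=
  {p | ∃ (m n l : ℕ) (a : Fin 4), (a = 2 ∨ a = 3) ∧
    (a = 2 → l = m) ∧ (a = 3 → l = n) ∧
    p.1 = List.replicate m 0 ++ List.replicate n 1 ++ [a] ∧
    p.2 = List.replicate l 4}

namespace QT

/-! ### Helper sums -/

lemma sum2 (f : Fin 19 → ℝ) (a b : Fin 19) (hab : a ≠ b)
    (h : ∀ k, k ≠ a → k ≠ b → f k = 0) : ∑ k, f k = f a + f b := by
  have : ∑ k, f k = ∑ k ∈ ({a,b} : Finset (Fin 19)), f k := by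
    symm
    apply Finset.sum_subset (Finset.subset_univ _)
    intro k _ hk
    simp only [Finset.mem_insert, Finset.mem_singleton, not_or] at hk
    exact h k hk.1 hk.2
  rw [this, Finset.sum_insert (by simp [hab]), Finset.sum_singleton]

lemma sum6 (f : Fin 19 → ℝ) (a b c d e g : Fin 19)
    (h1 : a ≠ b) (h2 : a ≠ c) (h3 : a ≠ d) (h4 : a ≠ e) (h5 : a ≠ g)
    (h6 : b ≠ c) (h7 : b ≠ d) (h8 : b ≠ e) (h9 : b ≠ g)
    (h10 : c ≠ d) (h11 : c ≠ e) (h12 : c ≠ g)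
    (h13 : d ≠ e) (h14 : d ≠ g) (h15 : e ≠ g)
    (h : ∀ k, k ≠ a → k ≠ b → k ≠ c → k ≠ d → k ≠ e → k ≠ g → f k = 0) :
    ∑ k, f k = f a + f b + f c + f d + f e + f g := by
  have : ∑ k, f k = ∑ k ∈ ({a,b,c,d,e,g} : Finset (Fin 19)), f k := by
    symm
    apply Finset.sum_subset (Finset.subset_univ _)
    intro k _ hk
    simp only [Finset.mem_insert, Finset.mem_singleton, not_or] at hk
    exact h k hk.1 hk.2.1 hk.2.2.1 hk.2.2.2.1 hk.2.2.2.2.1 hk.2.2.2.2.2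
  rw [this, Finset.sum_insert (by simp [h1,h2,h3,h4,h5]), Finset.sum_insert (by simp [h6,h7,h8,h9]),
    Finset.sum_insert (by simp [h10,h11,h12]), Finset.sum_insert (by simp [h13,h14]),
    Finset.sum_insert (by simp [h15]), Finset.sum_singleton]
  ring

lemma unitary_of_rows (M : Matrix (Fin 19) (Fin 19) ℝ)
    (h : ∀ q q', ∑ k, M q k * M q' k = if q = q' then 1 else 0) :
    M.map (fun x => (x : ℂ)) ∈ Matrix.unitaryGroup (Fin 19) ℂ := by
  rw [Matrix.mem_unitaryGroup_iff]
  ext q q'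
  simp only [Matrix.mul_apply, Matrix.one_apply, Matrix.map_apply, Matrix.star_apply,
    Complex.star_def, Complex.conj_ofReal]
  calc (∑ k, (M q k : ℂ) * (M q' k : ℂ)) = ((∑ k, M q k * M q' k : ℝ) : ℂ) := by push_cast; rfl
    _ = if q = q' then 1 else 0 := by rw [h q q']; split <;> norm_num

lemma rows_orth_of (M : Matrix (Fin 19) (Fin 19) ℝ) (S : Finset (Fin 19)) (g : Fin 19 → Fin 19)
    (hg : ∀ q ∉ S, ∀ p, M q p = if p = g q then 1 else 0)
    (hgi : ∀ q ∉ S, ∀ q' ∉ S, g q = g q' → q = q')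
    (horth : ∀ q ∈ S, ∀ q' ∈ S, ∑ k, M q k * M q' k = if q = q' then 1 else 0)
    (hcross : ∀ q ∈ S, ∀ q' ∉ S, M q (g q') = 0) :
    ∀ q q', ∑ k, M q k * M q' k = if q = q' then 1 else 0 := by
  intro q q'
  by_cases hq : q ∈ S <;> by_cases hq' : q' ∈ S
  · exact horth q hq q' hq'
  · have hterm : ∀ k, M q k * M q' k = if k = g q' then M q k else 0 := by
      intro k; rw [hg q' hq' k]; split <;> simp
    rw [Finset.sum_congr rfl (fun k _ => hterm k),
      Finset.sum_ite_eq' Finset.univ (g q') (fun k => M q k)]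
    have : q ≠ q' := fun h => hq' (h ▸ hq)
    simp [this, hcross q hq q' hq']
  · have hterm : ∀ k, M q k * M q' k = if k = g q then M q' k else 0 := by
      intro k; rw [hg q hq k]; split <;> simp
    rw [Finset.sum_congr rfl (fun k _ => hterm k),
      Finset.sum_ite_eq' Finset.univ (g q) (fun k => M q' k)]
    have : q ≠ q' := fun h => hq (h ▸ hq')
    simp [this, hcross q' hq' q hq]
  · have hterm : ∀ k, M q k * M q' k = if k = g q ∧ k = g q' then 1 else 0 := by
      intro k; rw [hg q hq k, hg q' hq' k]
      by_cases h1 : k = g q <;> by_cases h2 : k = g q' <;> simp [h1, h2]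
    rw [Finset.sum_congr rfl (fun k _ => hterm k)]
    by_cases h : q = q'
    · subst h; simp
    · have hne : g q ≠ g q' := fun hgg => h (hgi q hq q' hq' hgg)
      rw [if_neg h, Finset.sum_eq_zero]
      · intro k _
        by_cases h1 : k = g q <;> by_cases h2 : k = g q' <;> simp_all

/-! ### The machine.
State numbering: 0 `q₀` | 1 `sA` | 2 `jA` | 3 `sB` | 4 `jB` | 5 `pA1` | 6 `pA2`
| 7 `pB1` | 8 `pB2` | 9–12 accepting | 13–18 rejecting. -/

def g0 : Fin 19 → Fin 19 := ![0,1,13,3,14,15,16,17,18,9,10,11,12,2,4,5,6,7,8]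
def g2 : Fin 19 → Fin 19 := ![0,5,6,13,14,15,16,17,18,9,10,11,12,3,4,1,2,7,8]
def g3 : Fin 19 → Fin 19 := ![0,13,14,7,8,15,16,17,18,9,10,11,12,1,2,5,6,3,4]
def gE : Fin 19 → Fin 19 := ![13,14,15,16,17,9,10,11,12,5,6,7,8,0,1,2,3,4,18]
def g1 : Fin 19 → Fin 19 := ![0,1,2,3,4,15,16,17,18,9,10,11,12,13,14,5,6,7,8]
def gB : Fin 19 → Fin 19 := ![0,1,2,0,4,5,6,7,8,9,10,11,12,13,14,15,16,17,18]

def pm (g : Fin 19 → Fin 19) : Matrix (Fin 19) (Fin 19) ℝ := fun q p => if p = g q then 1 else 0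

def M1 (c s : ℝ) : Matrix (Fin 19) (Fin 19) ℝ := fun q p =>
  if q = 1 then (if p = 1 then c^2 else if p = 2 then c*s else if p = 13 then -s else 0)
  else if q = 2 then (if p = 1 then c*s else if p = 2 then s^2 else if p = 13 then c else 0)
  else if q = 13 then (if p = 1 then -s else if p = 2 then c else 0)
  else if q = 3 then (if p = 3 then c^2 else if p = 4 then c*s else if p = 14 then -s else 0)
  else if q = 4 then (if p = 3 then c*s else if p = 4 then s^2 else if p = 14 then c else 0)
  else if q = 14 then (if p = 3 then -s else if p = 4 then c else 0)
  else if p = g1 q then 1 else 0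

noncomputable def bb : ℝ := (Real.sqrt 2)⁻¹

lemma bb_sq : bb^2 = 1/2 := by
  rw [bb, inv_pow, Real.sq_sqrt (by norm_num : (0:ℝ) ≤ 2)]
  norm_num

noncomputable def MB : Matrix (Fin 19) (Fin 19) ℝ := fun q p =>
  if q = 0 then (if p = 1 then bb else if p = 3 then bb else 0)
  else if q = 1 then (if p = 1 then bb else if p = 3 then -bb else 0)
  else if p = gB q then 1 else 0

lemma pm_orth (g : Fin 19 → Fin 19) (hg : Function.Injective g) :
    ∀ q q', ∑ k, pm g q k * pm g q' k = if q = q' then 1 else 0 := by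
  refine rows_orth_of _ ∅ g (fun q _ p => rfl) (fun q _ q' _ h => hg h) (by simp) (by simp)

lemma M1_orth (c s : ℝ) (hcs : c^2 + s^2 = 1) :
    ∀ q q', ∑ k, M1 c s q k * M1 c s q' k = if q = q' then 1 else 0 := by
  apply rows_orth_of _ ({1,2,3,4,13,14} : Finset (Fin 19)) g1
  · intro q hq p
    fin_cases q <;> simp_all (config := { decide := true }) [M1, g1]
  · decide
  · intro q hq q' hq'
    fin_cases hq <;> fin_cases hq' <;>
      rw [sum6 _ 1 2 3 4 13 14 (by decide) (by decide) (by decide) (by decide) (by decide)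
        (by decide) (by decide) (by decide) (by decide) (by decide) (by decide) (by decide)
        (by decide) (by decide) (by decide)
        (fun k k1 k2 k3 k4 k5 k6 => by
          simp (config := { decide := true }) [M1, k1, k2, k3, k4, k5, k6])] <;>
      simp (config := { decide := true }) [M1] <;>
      first
        | ring1
        | linear_combination hcs
        | linear_combination c*s*hcs
        | linear_combination (c^2+1)*hcs
        | linear_combination (s^2+1)*hcs
  · intro q hq q' hq'
    fin_cases hq <;> fin_cases q' <;>
      first
        | (exact absurd (by decide) hq')
        | simp (config := { decide := true }) [M1, g1]

lemma MB_orth : ∀ q q', ∑ k, MB q k * MB q' k = if q = q' then 1 else 0 := by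
  have hb : bb^2 = 1/2 := bb_sq
  apply rows_orth_of _ ({0,1} : Finset (Fin 19)) gB
  · intro q hq p
    fin_cases q <;> simp_all (config := { decide := true }) [MB, gB]
  · decide
  · intro q hq q' hq'
    fin_cases hq <;> fin_cases hq' <;>
      rw [sum2 _ 1 3 (by decide)
        (fun k k1 k2 => by simp (config := { decide := true }) [MB, k1, k2])] <;>
      simp (config := { decide := true }) [MB] <;> nlinarith [hb]
  · intro q hq q' hq'
    fin_cases hq <;> fin_cases q' <;>
      first
        | (exact absurd (by decide) hq')
        | simp (config := { decide := true }) [MB, gB]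

end QT

namespace QT

def accS : Finset (Fin 19) := {9,10,11,12}
def rejS : Finset (Fin 19) := {13,14,15,16,17,18}

noncomputable def VC (c s : ℝ) (l : Fin 4) : Matrix (Fin 19) (Fin 19) ℂ :=
  (if l = 0 then pm g0 else if l = 1 then M1 c s else if l = 2 then pm g2 else pm g3).map
    (fun x => (x : ℂ))

def outC (l : Fin 4) (q : Fin 19) : List (Fin 5) :=
  if l = 0 ∧ q = 1 then [4] else if l = 1 ∧ (q = 3 ∨ q = 4) then [4] else []

noncomputable def T (c s : ℝ) (hcs : c^2 + s^2 = 1) : QFST (Fin 19) (Fin 4) (Fin 5) where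
  V := VC c s
  Vbeg := MB.map (fun x => (x : ℂ))
  Vend := (pm gE).map (fun x => (x : ℂ))
  out := outC
  outBeg := fun _ => []
  outEnd := fun _ => []
  init := 0
  acc := accS
  rej := rejS
  acc_disj_rej := by decide
  unitary := by
    intro a
    fin_cases a
    · exact unitary_of_rows _ (pm_orth g0 (by decide))
    · exact unitary_of_rows _ (M1_orth c s hcs)
    · exact unitary_of_rows _ (pm_orth g2 (by decide))
    · exact unitary_of_rows _ (pm_orth g3 (by decide))
  unitaryBeg := unitary_of_rows _ MB_orth
  unitaryEnd := unitary_of_rows _ (pm_orth gE (by decide))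
  endHalts := by
    intro q hq1 hq2 p hp1 hp2
    fin_cases q <;> fin_cases p <;>
      simp_all (config := { decide := true }) [pm, gE, accS, rejS, Matrix.map_apply]

end QT

namespace QT

def nonS : Finset (Fin 19) := Finset.univ \ (accS ∪ rejS)

/-- a single basis configuration with real amplitude `z` -/
def atom (q0 : Fin 19) (u : List (Fin 5)) (z : ℝ) : Fin 19 → List (Fin 5) → ℂ :=
  fun p v => if p = q0 ∧ v = u then (z : ℂ) else 0

lemma suffix_take (o u w : List (Fin 5)) :
    (o <:+ w ∧ w.take (w.length - o.length) = u) ↔ w = u ++ o := by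
  constructor
  · rintro ⟨⟨t, rfl⟩, h2⟩
    rw [List.length_append, Nat.add_sub_cancel, List.take_left] at h2
    rw [h2]
  · rintro rfl
    refine ⟨List.suffix_append u o, ?_⟩
    rw [List.length_append, Nat.add_sub_cancel, List.take_left]

lemma qStepAmp_atom (M : Matrix (Fin 19) (Fin 19) ℂ) (o : Fin 19 → List (Fin 5))
    (q0 : Fin 19) (u : List (Fin 5)) (z : ℝ) (p : Fin 19) (w : List (Fin 5)) :
    qStepAmp (M, o) (atom q0 u z) p w = if w = u ++ o q0 then (z : ℂ) * M q0 p else 0 := by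
  unfold qStepAmp atom
  rw [Finset.sum_eq_single q0]
  · by_cases hw : w = u ++ o q0
    · have h := (suffix_take (o q0) u w).2 hw
      rw [if_pos hw, if_pos h.1, if_pos ⟨rfl, h.2⟩]
    · rw [if_neg hw]
      by_cases h1 : o q0 <:+ w
      · have : ¬ (w.take (w.length - (o q0).length) = u) := by
          intro h2; exact hw ((suffix_take (o q0) u w).1 ⟨h1, h2⟩)
        simp [h1, this]
      · simp [h1]
  · intro b _ hb
    simp [hb]
  · intro h
    exact absurd (Finset.mem_univ q0) h

lemma qStepAmp_add (st : Matrix (Fin 19) (Fin 19) ℂ × (Fin 19 → List (Fin 5)))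
    (f g : Fin 19 → List (Fin 5) → ℂ) (p : Fin 19) (w : List (Fin 5)) :
    qStepAmp st (fun q u => f q u + g q u) p w = qStepAmp st f p w + qStepAmp st g p w := by
  unfold qStepAmp
  rw [← Finset.sum_add_distrib]
  apply Finset.sum_congr rfl
  intro q _
  split <;> ring

lemma qStepAmp_zero (st : Matrix (Fin 19) (Fin 19) ℂ × (Fin 19 → List (Fin 5)))
    (p : Fin 19) (w : List (Fin 5)) :
    qStepAmp st (fun _ _ => (0:ℂ)) p w = 0 := by
  unfold qStepAmp
  apply Finset.sum_eq_zero
  intro q _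
  split <;> ring

lemma rstep_atom_to (M : Matrix (Fin 19) (Fin 19) ℂ) (o : Fin 19 → List (Fin 5))
    (q0 t : Fin 19) (u : List (Fin 5)) (z : ℝ)
    (hrow : ∀ p, M q0 p = if p = t then 1 else 0) (ht : t ∈ nonS) (p : Fin 19) (w : List (Fin 5)) :
    (if p ∈ nonS then qStepAmp (M, o) (atom q0 u z) p w else 0) = atom t (u ++ o q0) z p w := by
  by_cases hp : p ∈ nonS
  · rw [if_pos hp, qStepAmp_atom, hrow]
    unfold atom
    by_cases hpt : p = t <;> by_cases hw : w = u ++ o q0 <;> simp [hpt, hw]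
  · rw [if_neg hp]
    unfold atom
    have : ¬ (p = t) := fun h => hp (h ▸ ht)
    simp [this]

lemma rstep_atom_halt (M : Matrix (Fin 19) (Fin 19) ℂ) (o : Fin 19 → List (Fin 5))
    (q0 t : Fin 19) (u : List (Fin 5)) (z : ℝ)
    (hrow : ∀ p, M q0 p = if p = t then 1 else 0) (ht : t ∉ nonS) (p : Fin 19) (w : List (Fin 5)) :
    (if p ∈ nonS then qStepAmp (M, o) (atom q0 u z) p w else 0) = 0 := by
  by_cases hp : p ∈ nonS
  · rw [if_pos hp, qStepAmp_atom, hrow]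
    have : ¬ (p = t) := fun h => ht (h ▸ hp)
    simp [this]
  · rw [if_neg hp]

end QT

namespace QT

inductive Ph | s | w | p1 | p2 | d
deriving DecidableEq

structure BS where
  ph : Ph
  a : ℝ
  k : ℕ

noncomputable def evalA (c s : ℝ) : BS → Fin 19 → List (Fin 5) → ℂ
  | ⟨Ph.s, a, k⟩ => atom 1 (List.replicate k 4) a
  | ⟨Ph.w, a, k⟩ => fun p v =>
      atom 1 (List.replicate k 4) (a*c) p v + atom 2 (List.replicate k 4) (a*s) p v
  | ⟨Ph.p1, a, k⟩ => atom 5 (List.replicate k 4) a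
  | ⟨Ph.p2, a, k⟩ => fun p v =>
      atom 5 (List.replicate k 4) (a*c) p v + atom 6 (List.replicate k 4) (a*s) p v
  | ⟨Ph.d, _, _⟩ => fun _ _ => 0

noncomputable def evalB (c s : ℝ) : BS → Fin 19 → List (Fin 5) → ℂ
  | ⟨Ph.s, a, k⟩ => atom 3 (List.replicate k 4) a
  | ⟨Ph.w, a, k⟩ => fun p v =>
      atom 3 (List.replicate k 4) (a*c) p v + atom 4 (List.replicate k 4) (a*s) p v
  | ⟨Ph.p1, a, k⟩ => atom 7 (List.replicate k 4) a
  | ⟨Ph.p2, a, k⟩ => fun p v =>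
      atom 7 (List.replicate k 4) (a*c) p v + atom 8 (List.replicate k 4) (a*s) p v
  | ⟨Ph.d, _, _⟩ => fun _ _ => 0

def stepA (c : ℝ) (l : Fin 4) (b : BS) : BS :=
  match b with
  | ⟨Ph.s, a, k⟩ =>
      if l = 0 then ⟨Ph.s, a, k+1⟩ else if l = 1 then ⟨Ph.w, a*c, k⟩
      else if l = 2 then ⟨Ph.p1, a, k⟩ else ⟨Ph.d, 0, 0⟩
  | ⟨Ph.w, a, k⟩ =>
      if l = 0 then ⟨Ph.s, a*c, k+1⟩ else if l = 1 then ⟨Ph.w, a, k⟩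
      else if l = 2 then ⟨Ph.p2, a, k⟩ else ⟨Ph.d, 0, 0⟩
  | _ => ⟨Ph.d, 0, 0⟩

def stepB (c : ℝ) (l : Fin 4) (b : BS) : BS :=
  match b with
  | ⟨Ph.s, a, k⟩ =>
      if l = 0 then ⟨Ph.s, a, k⟩ else if l = 1 then ⟨Ph.w, a*c, k+1⟩
      else if l = 3 then ⟨Ph.p1, a, k⟩ else ⟨Ph.d, 0, 0⟩
  | ⟨Ph.w, a, k⟩ =>
      if l = 0 then ⟨Ph.s, a*c, k⟩ else if l = 1 then ⟨Ph.w, a, k+1⟩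
      else if l = 3 then ⟨Ph.p2, a, k⟩ else ⟨Ph.d, 0, 0⟩
  | _ => ⟨Ph.d, 0, 0⟩

lemma ite_add_dist (h : Prop) [Decidable h] (x y : ℂ) :
    (if h then x + y else 0) = (if h then x else 0) + (if h then y else 0) := by
  split <;> simp

lemma row_M1p (c s : ℝ) (q0 t : Fin 19) (h1 : q0 ≠ 1) (h2 : q0 ≠ 2) (h3 : q0 ≠ 13)
    (h4 : q0 ≠ 3) (h5 : q0 ≠ 4) (h6 : q0 ≠ 14) (h : g1 q0 = t) :
    ∀ p, ((M1 c s).map (fun x : ℝ => (x:ℂ))) q0 p = if p = t then 1 else 0 := by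
  intro p
  simp only [M1, Matrix.map_apply, if_neg h1, if_neg h2, if_neg h3, if_neg h4, if_neg h5,
    if_neg h6, h]
  split <;> simp

lemma row_pm (g : Fin 19 → Fin 19) (q0 t : Fin 19) (h : g q0 = t) :
    ∀ p, ((pm g).map (fun x : ℝ => (x:ℂ))) q0 p = if p = t then 1 else 0 := by
  intro p
  simp only [pm, Matrix.map_apply, h]
  split <;> simp

end QT

namespace QT

lemma fin4_cases : ∀ l : Fin 4, l = 0 ∨ l = 1 ∨ l = 2 ∨ l = 3 := by decide
set_option maxHeartbeats 1000000 in
lemma stepA_eval (c s : ℝ) (hcs : c^2 + s^2 = 1) (l : Fin 4) (b : BS) (p : Fin 19)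
    (w : List (Fin 5)) :
    (if p ∈ nonS then qStepAmp (VC c s l, outC l) (evalA c s b) p w else 0)
      = evalA c s (stepA c l b) p w := by
  have hcsC : (c:ℂ)^2 + (s:ℂ)^2 = 1 := by exact_mod_cast hcs
  have hV0 : VC c s 0 = (pm g0).map (fun x : ℝ => (x:ℂ)) := rfl
  have hV1 : VC c s 1 = (M1 c s).map (fun x : ℝ => (x:ℂ)) := rfl
  have hV2 : VC c s 2 = (pm g2).map (fun x : ℝ => (x:ℂ)) := rfl
  have hV3 : VC c s 3 = (pm g3).map (fun x : ℝ => (x:ℂ)) := rfl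
  obtain ⟨ph, a, k⟩ := b
  rcases fin4_cases l with rfl | rfl | rfl | rfl <;> cases ph
  -- letter 0
  · simp only [evalA, hV0]
    rw [rstep_atom_to _ _ 1 1 _ _ (row_pm g0 1 1 (by decide)) (by decide) p w]
    simp (config := { decide := true }) [stepA, evalA, outC, List.replicate_succ']
  · simp only [evalA, qStepAmp_add, ite_add_dist, hV0]
    rw [rstep_atom_to _ _ 1 1 _ _ (row_pm g0 1 1 (by decide)) (by decide) p w,
      rstep_atom_halt _ _ 2 13 _ _ (row_pm g0 2 13 (by decide)) (by decide) p w]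
    simp (config := { decide := true }) [stepA, evalA, outC, List.replicate_succ']
  · simp only [evalA, hV0]
    rw [rstep_atom_halt _ _ 5 15 _ _ (row_pm g0 5 15 (by decide)) (by decide) p w]
    simp (config := { decide := true }) [stepA, evalA]
  · simp only [evalA, qStepAmp_add, ite_add_dist, hV0]
    rw [rstep_atom_halt _ _ 5 15 _ _ (row_pm g0 5 15 (by decide)) (by decide) p w,
      rstep_atom_halt _ _ 6 16 _ _ (row_pm g0 6 16 (by decide)) (by decide) p w]
    simp (config := { decide := true }) [stepA, evalA]
  · simp (config := { decide := true }) [stepA, evalA, qStepAmp_zero]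
  -- letter 1
  · simp only [evalA, stepA, qStepAmp_atom, reduceIte, hV1]
    have ho1 : outC 1 1 = [] := by decide
    rw [ho1, List.append_nil]
    by_cases hw : w = List.replicate k 4
    · by_cases hp : p ∈ nonS
      · rw [if_pos hp, if_pos hw]
        by_cases hp1 : p = 1
        · subst hp1
          simp (config := { decide := true }) [atom, hw, M1, Matrix.map_apply]
          push_cast
          ring
        · by_cases hp2 : p = 2
          · subst hp2
            simp (config := { decide := true }) [atom, hw, M1, Matrix.map_apply]
            push_cast
            ring
          · by_cases hp13 : p = 13
            · subst hp13
              exact absurd hp (by decide)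
            · simp (config := { decide := true }) [atom, hw, M1, Matrix.map_apply,
                hp1, hp2, hp13]
      · rw [if_neg hp]
        have hp1 : p ≠ 1 := fun h => hp (h ▸ (by decide))
        have hp2 : p ≠ 2 := fun h => hp (h ▸ (by decide))
        simp [atom, hp1, hp2]
    · simp [atom, hw]
  · simp only [evalA, stepA, qStepAmp_add, ite_add_dist, qStepAmp_atom, reduceIte, hV1]
    have ho1 : outC 1 1 = [] := by decide
    have ho2 : outC 1 2 = [] := by decide
    rw [ho1, ho2, List.append_nil]
    by_cases hw : w = List.replicate k 4
    · by_cases hp : p ∈ nonS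
      · rw [if_pos hp, if_pos hp, if_pos hw, if_pos hw]
        by_cases hp1 : p = 1
        · subst hp1
          simp (config := { decide := true }) [atom, hw, M1, Matrix.map_apply]
          push_cast
          linear_combination (↑a * ↑c : ℂ) * hcsC
        · by_cases hp2 : p = 2
          · subst hp2
            simp (config := { decide := true }) [atom, hw, M1, Matrix.map_apply]
            push_cast
            linear_combination (↑a * ↑s : ℂ) * hcsC
          · by_cases hp13 : p = 13
            · subst hp13
              exact absurd hp (by decide)
            · simp (config := { decide := true }) [atom, hw, M1, Matrix.map_apply,
                hp1, hp2, hp13]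
      · rw [if_neg hp, if_neg hp]
        have hp1 : p ≠ 1 := fun h => hp (h ▸ (by decide))
        have hp2 : p ≠ 2 := fun h => hp (h ▸ (by decide))
        simp [atom, hp1, hp2]
    · simp [atom, hw]
  · simp only [evalA, hV1]
    rw [rstep_atom_halt _ _ 5 15 _ _
      (row_M1p c s 5 15 (by decide) (by decide) (by decide) (by decide) (by decide) (by decide)
        (by decide)) (by decide) p w]
    simp (config := { decide := true }) [stepA, evalA]
  · simp only [evalA, qStepAmp_add, ite_add_dist, hV1]
    rw [rstep_atom_halt _ _ 5 15 _ _
      (row_M1p c s 5 15 (by decide) (by decide) (by decide) (by decide) (by decide) (by decide)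
        (by decide)) (by decide) p w,
      rstep_atom_halt _ _ 6 16 _ _
      (row_M1p c s 6 16 (by decide) (by decide) (by decide) (by decide) (by decide) (by decide)
        (by decide)) (by decide) p w]
    simp (config := { decide := true }) [stepA, evalA]
  · simp (config := { decide := true }) [stepA, evalA, qStepAmp_zero]
  -- letter 2
  · simp only [evalA, hV2]
    rw [rstep_atom_to _ _ 1 5 _ _ (row_pm g2 1 5 (by decide)) (by decide) p w]
    simp (config := { decide := true }) [stepA, evalA, outC]
  · simp only [evalA, qStepAmp_add, ite_add_dist, hV2]
    rw [rstep_atom_to _ _ 1 5 _ _ (row_pm g2 1 5 (by decide)) (by decide) p w,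
      rstep_atom_to _ _ 2 6 _ _ (row_pm g2 2 6 (by decide)) (by decide) p w]
    simp (config := { decide := true }) [stepA, evalA, outC]
  · simp only [evalA, hV2]
    rw [rstep_atom_halt _ _ 5 15 _ _ (row_pm g2 5 15 (by decide)) (by decide) p w]
    simp (config := { decide := true }) [stepA, evalA]
  · simp only [evalA, qStepAmp_add, ite_add_dist, hV2]
    rw [rstep_atom_halt _ _ 5 15 _ _ (row_pm g2 5 15 (by decide)) (by decide) p w,
      rstep_atom_halt _ _ 6 16 _ _ (row_pm g2 6 16 (by decide)) (by decide) p w]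
    simp (config := { decide := true }) [stepA, evalA]
  · simp (config := { decide := true }) [stepA, evalA, qStepAmp_zero]
  -- letter 3
  · simp only [evalA, hV3]
    rw [rstep_atom_halt _ _ 1 13 _ _ (row_pm g3 1 13 (by decide)) (by decide) p w]
    simp (config := { decide := true }) [stepA, evalA]
  · simp only [evalA, qStepAmp_add, ite_add_dist, hV3]
    rw [rstep_atom_halt _ _ 1 13 _ _ (row_pm g3 1 13 (by decide)) (by decide) p w,
      rstep_atom_halt _ _ 2 14 _ _ (row_pm g3 2 14 (by decide)) (by decide) p w]
    simp (config := { decide := true }) [stepA, evalA]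
  · simp only [evalA, hV3]
    rw [rstep_atom_halt _ _ 5 15 _ _ (row_pm g3 5 15 (by decide)) (by decide) p w]
    simp (config := { decide := true }) [stepA, evalA]
  · simp only [evalA, qStepAmp_add, ite_add_dist, hV3]
    rw [rstep_atom_halt _ _ 5 15 _ _ (row_pm g3 5 15 (by decide)) (by decide) p w,
      rstep_atom_halt _ _ 6 16 _ _ (row_pm g3 6 16 (by decide)) (by decide) p w]
    simp (config := { decide := true }) [stepA, evalA]
  · simp (config := { decide := true }) [stepA, evalA, qStepAmp_zero]

end QT

namespace QT

set_option maxHeartbeats 1000000 in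
lemma stepB_eval (c s : ℝ) (hcs : c^2 + s^2 = 1) (l : Fin 4) (b : BS) (p : Fin 19)
    (w : List (Fin 5)) :
    (if p ∈ nonS then qStepAmp (VC c s l, outC l) (evalB c s b) p w else 0)
      = evalB c s (stepB c l b) p w := by
  have hcsC : (c:ℂ)^2 + (s:ℂ)^2 = 1 := by exact_mod_cast hcs
  have hV0 : VC c s 0 = (pm g0).map (fun x : ℝ => (x:ℂ)) := rfl
  have hV1 : VC c s 1 = (M1 c s).map (fun x : ℝ => (x:ℂ)) := rfl
  have hV2 : VC c s 2 = (pm g2).map (fun x : ℝ => (x:ℂ)) := rfl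
  have hV3 : VC c s 3 = (pm g3).map (fun x : ℝ => (x:ℂ)) := rfl
  obtain ⟨ph, a, k⟩ := b
  rcases fin4_cases l with rfl | rfl | rfl | rfl <;> cases ph
  -- letter 0
  · simp only [evalB, hV0]
    rw [rstep_atom_to _ _ 3 3 _ _ (row_pm g0 3 3 (by decide)) (by decide) p w]
    simp (config := { decide := true }) [stepB, evalB, outC]
  · simp only [evalB, qStepAmp_add, ite_add_dist, hV0]
    rw [rstep_atom_to _ _ 3 3 _ _ (row_pm g0 3 3 (by decide)) (by decide) p w,
      rstep_atom_halt _ _ 4 14 _ _ (row_pm g0 4 14 (by decide)) (by decide) p w]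
    simp (config := { decide := true }) [stepB, evalB, outC]
  · simp only [evalB, hV0]
    rw [rstep_atom_halt _ _ 7 17 _ _ (row_pm g0 7 17 (by decide)) (by decide) p w]
    simp (config := { decide := true }) [stepB, evalB]
  · simp only [evalB, qStepAmp_add, ite_add_dist, hV0]
    rw [rstep_atom_halt _ _ 7 17 _ _ (row_pm g0 7 17 (by decide)) (by decide) p w,
      rstep_atom_halt _ _ 8 18 _ _ (row_pm g0 8 18 (by decide)) (by decide) p w]
    simp (config := { decide := true }) [stepB, evalB]
  · simp (config := { decide := true }) [stepB, evalB, qStepAmp_zero]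
  -- letter 1
  · simp only [evalB, stepB, qStepAmp_atom, reduceIte, hV1]
    have ho1 : outC 1 3 = [4] := by decide
    rw [ho1]
    by_cases hw : w = List.replicate k 4 ++ [4]
    · by_cases hp : p ∈ nonS
      · rw [if_pos hp, if_pos hw]
        by_cases hp3 : p = 3
        · subst hp3
          simp (config := { decide := true }) [atom, hw, M1, Matrix.map_apply,
            List.replicate_succ']
          push_cast
          ring
        · by_cases hp4 : p = 4
          · subst hp4
            simp (config := { decide := true }) [atom, hw, M1, Matrix.map_apply,
              List.replicate_succ']
            push_cast
            ring
          · by_cases hp14 : p = 14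
            · subst hp14
              exact absurd hp (by decide)
            · simp (config := { decide := true }) [atom, hw, M1, Matrix.map_apply,
                hp3, hp4, hp14]
      · rw [if_neg hp]
        have hp3 : p ≠ 3 := fun h => hp (h ▸ (by decide))
        have hp4 : p ≠ 4 := fun h => hp (h ▸ (by decide))
        simp [atom, hp3, hp4]
    · simp [atom, hw, List.replicate_succ']
  · simp only [evalB, stepB, qStepAmp_add, ite_add_dist, qStepAmp_atom, reduceIte, hV1]
    have ho1 : outC 1 3 = [4] := by decide
    have ho2 : outC 1 4 = [4] := by decide
    rw [ho1, ho2]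
    by_cases hw : w = List.replicate k 4 ++ [4]
    · by_cases hp : p ∈ nonS
      · rw [if_pos hp, if_pos hp, if_pos hw, if_pos hw]
        by_cases hp3 : p = 3
        · subst hp3
          simp (config := { decide := true }) [atom, hw, M1, Matrix.map_apply,
            List.replicate_succ']
          push_cast
          linear_combination (↑a * ↑c : ℂ) * hcsC
        · by_cases hp4 : p = 4
          · subst hp4
            simp (config := { decide := true }) [atom, hw, M1, Matrix.map_apply,
              List.replicate_succ']
            push_cast
            linear_combination (↑a * ↑s : ℂ) * hcsC
          · by_cases hp14 : p = 14
            · subst hp14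
              exact absurd hp (by decide)
            · simp (config := { decide := true }) [atom, hw, M1, Matrix.map_apply,
                hp3, hp4, hp14]
      · rw [if_neg hp, if_neg hp]
        have hp3 : p ≠ 3 := fun h => hp (h ▸ (by decide))
        have hp4 : p ≠ 4 := fun h => hp (h ▸ (by decide))
        simp [atom, hp3, hp4]
    · simp [atom, hw, List.replicate_succ']
  · simp only [evalB, hV1]
    rw [rstep_atom_halt _ _ 7 17 _ _
      (row_M1p c s 7 17 (by decide) (by decide) (by decide) (by decide) (by decide) (by decide)
        (by decide)) (by decide) p w]
    simp (config := { decide := true }) [stepB, evalB]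
  · simp only [evalB, qStepAmp_add, ite_add_dist, hV1]
    rw [rstep_atom_halt _ _ 7 17 _ _
      (row_M1p c s 7 17 (by decide) (by decide) (by decide) (by decide) (by decide) (by decide)
        (by decide)) (by decide) p w,
      rstep_atom_halt _ _ 8 18 _ _
      (row_M1p c s 8 18 (by decide) (by decide) (by decide) (by decide) (by decide) (by decide)
        (by decide)) (by decide) p w]
    simp (config := { decide := true }) [stepB, evalB]
  · simp (config := { decide := true }) [stepB, evalB, qStepAmp_zero]
  -- letter 2
  · simp only [evalB, hV2]
    rw [rstep_atom_halt _ _ 3 13 _ _ (row_pm g2 3 13 (by decide)) (by decide) p w]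
    simp (config := { decide := true }) [stepB, evalB]
  · simp only [evalB, qStepAmp_add, ite_add_dist, hV2]
    rw [rstep_atom_halt _ _ 3 13 _ _ (row_pm g2 3 13 (by decide)) (by decide) p w,
      rstep_atom_halt _ _ 4 14 _ _ (row_pm g2 4 14 (by decide)) (by decide) p w]
    simp (config := { decide := true }) [stepB, evalB]
  · simp only [evalB, hV2]
    rw [rstep_atom_halt _ _ 7 17 _ _ (row_pm g2 7 17 (by decide)) (by decide) p w]
    simp (config := { decide := true }) [stepB, evalB]
  · simp only [evalB, qStepAmp_add, ite_add_dist, hV2]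
    rw [rstep_atom_halt _ _ 7 17 _ _ (row_pm g2 7 17 (by decide)) (by decide) p w,
      rstep_atom_halt _ _ 8 18 _ _ (row_pm g2 8 18 (by decide)) (by decide) p w]
    simp (config := { decide := true }) [stepB, evalB]
  · simp (config := { decide := true }) [stepB, evalB, qStepAmp_zero]
  -- letter 3
  · simp only [evalB, hV3]
    rw [rstep_atom_to _ _ 3 7 _ _ (row_pm g3 3 7 (by decide)) (by decide) p w]
    simp (config := { decide := true }) [stepB, evalB, outC]
  · simp only [evalB, qStepAmp_add, ite_add_dist, hV3]
    rw [rstep_atom_to _ _ 3 7 _ _ (row_pm g3 3 7 (by decide)) (by decide) p w,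
      rstep_atom_to _ _ 4 8 _ _ (row_pm g3 4 8 (by decide)) (by decide) p w]
    simp (config := { decide := true }) [stepB, evalB, outC]
  · simp only [evalB, hV3]
    rw [rstep_atom_halt _ _ 7 17 _ _ (row_pm g3 7 17 (by decide)) (by decide) p w]
    simp (config := { decide := true }) [stepB, evalB]
  · simp only [evalB, qStepAmp_add, ite_add_dist, hV3]
    rw [rstep_atom_halt _ _ 7 17 _ _ (row_pm g3 7 17 (by decide)) (by decide) p w,
      rstep_atom_halt _ _ 8 18 _ _ (row_pm g3 8 18 (by decide)) (by decide) p w]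
    simp (config := { decide := true }) [stepB, evalB]
  · simp (config := { decide := true }) [stepB, evalB, qStepAmp_zero]

end QT

namespace QT

def fOut (b : BS) (w : List (Fin 5)) : ℝ :=
  if (b.ph = Ph.p1 ∨ b.ph = Ph.p2) ∧ w = List.replicate b.k 4 then b.a^2 else 0

lemma norm_ite_sq (h : Prop) [Decidable h] (z : ℝ) :
    ‖(if h then (z:ℂ) else 0)‖^2 = if h then z^2 else 0 := by
  split <;> simp [Complex.norm_real, sq_abs]

lemma sum_accS (f : Fin 19 → ℝ) : ∑ p ∈ accS, f p = f 9 + f 10 + f 11 + f 12 := by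
  rw [show accS = {9,10,11,12} from rfl]
  rw [Finset.sum_insert (by decide), Finset.sum_insert (by decide),
    Finset.sum_insert (by decide), Finset.sum_singleton]
  ring

lemma acc_mem_cases : ∀ p : Fin 19, p ∈ accS → (p = 9 ∨ p = 10 ∨ p = 11 ∨ p = 12) := by decide

set_option maxHeartbeats 1000000 in
lemma accA_zero (c s : ℝ) (l : Fin 4) (b : BS) (p : Fin 19) (hp : p ∈ accS)
    (w : List (Fin 5)) : qStepAmp (VC c s l, outC l) (evalA c s b) p w = 0 := by
  obtain ⟨ph, a, k⟩ := b
  rcases acc_mem_cases p hp with rfl | rfl | rfl | rfl <;>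
    rcases fin4_cases l with rfl | rfl | rfl | rfl <;> cases ph <;>
    simp (config := { decide := true }) [VC, evalA, qStepAmp_add, qStepAmp_atom,
      qStepAmp_zero, M1, pm, Matrix.map_apply]

set_option maxHeartbeats 1000000 in
lemma accB_zero (c s : ℝ) (l : Fin 4) (b : BS) (p : Fin 19) (hp : p ∈ accS)
    (w : List (Fin 5)) : qStepAmp (VC c s l, outC l) (evalB c s b) p w = 0 := by
  obtain ⟨ph, a, k⟩ := b
  rcases acc_mem_cases p hp with rfl | rfl | rfl | rfl <;>
    rcases fin4_cases l with rfl | rfl | rfl | rfl <;> cases ph <;>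
    simp (config := { decide := true }) [VC, evalB, qStepAmp_add, qStepAmp_atom,
      qStepAmp_zero, M1, pm, Matrix.map_apply]

lemma acc_step_zero (c s : ℝ) (l : Fin 4) (i j : BS) (w : List (Fin 5)) :
    ∑ p ∈ accS, ‖qStepAmp (VC c s l, outC l)
      (fun q u => evalA c s i q u + evalB c s j q u) p w‖^2 = 0 := by
  apply Finset.sum_eq_zero
  intro p hp
  rw [qStepAmp_add, accA_zero c s l i p hp w, accB_zero c s l j p hp w]
  simp

set_option maxHeartbeats 1000000 in
lemma end_sum (c s : ℝ) (hcs : c^2 + s^2 = 1) (i j : BS) (w : List (Fin 5)) :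
    ∑ p ∈ accS, ‖qStepAmp ((pm gE).map (fun x : ℝ => (x:ℂ)), fun _ => ([] : List (Fin 5)))
      (fun q u => evalA c s i q u + evalB c s j q u) p w‖^2 = fOut i w + fOut j w := by
  obtain ⟨iph, ia, ik⟩ := i
  obtain ⟨jph, ja, jk⟩ := j
  rw [sum_accS]
  cases iph <;> cases jph <;>
    simp (config := { decide := true }) only [evalA, evalB, qStepAmp_add, qStepAmp_atom,
      qStepAmp_zero, List.append_nil, pm, Matrix.map_apply, fOut] <;>
    simp (config := { decide := true }) [norm_ite_sq, mul_one, mul_zero] <;>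
    split_ifs <;> simp_all [mul_pow, sq_abs] <;>
    first
      | ring1
      | linear_combination ia^2*hcs
      | linear_combination ja^2*hcs
      | linear_combination (ia^2+ja^2)*hcs

end QT

namespace QT

def runA (c : ℝ) (v : List (Fin 4)) (b : BS) : BS := v.foldl (fun x l => stepA c l x) b
def runB (c : ℝ) (v : List (Fin 4)) (b : BS) : BS := v.foldl (fun x l => stepB c l x) b

lemma beg_eval (c s : ℝ) (p : Fin 19) (w : List (Fin 5)) :
    (if p ∈ nonS then qStepAmp (MB.map (fun x : ℝ => (x:ℂ)), fun _ => ([] : List (Fin 5)))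
      (atom 0 [] 1) p w else 0)
    = evalA c s ⟨Ph.s, bb, 0⟩ p w + evalB c s ⟨Ph.s, bb, 0⟩ p w := by
  simp only [qStepAmp_atom, evalA, evalB, List.append_nil, List.replicate_zero]
  by_cases hw : w = ([] : List (Fin 5))
  · by_cases hp : p ∈ nonS
    · rw [if_pos hp, if_pos hw]
      by_cases hp1 : p = 1
      · subst hp1
        simp (config := { decide := true }) [atom, hw, MB, Matrix.map_apply]
      · by_cases hp3 : p = 3
        · subst hp3
          simp (config := { decide := true }) [atom, hw, MB, Matrix.map_apply]
        · simp (config := { decide := true }) [atom, hw, MB, Matrix.map_apply, hp1, hp3]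
    · rw [if_neg hp]
      have hp1 : p ≠ 1 := fun h => hp (h ▸ (by decide))
      have hp3 : p ≠ 3 := fun h => hp (h ▸ (by decide))
      simp [atom, hp1, hp3]
  · simp [atom, hw]

lemma beg_acc (w : List (Fin 5)) :
    ∑ p ∈ accS, ‖qStepAmp (MB.map (fun x : ℝ => (x:ℂ)), fun _ => ([] : List (Fin 5)))
      (atom 0 [] 1) p w‖^2 = 0 := by
  apply Finset.sum_eq_zero
  intro p hp
  rcases acc_mem_cases p hp with rfl | rfl | rfl | rfl <;>
    simp (config := { decide := true }) [qStepAmp_atom, MB, Matrix.map_apply]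

lemma qacc_main (c s : ℝ) (hcs : c^2 + s^2 = 1) :
    ∀ (v : List (Fin 4)) (i j : BS) (P : List (Fin 5) → ℝ),
    qAccAux accS nonS ((v.map fun a => (VC c s a, outC a))
        ++ [((pm gE).map (fun x : ℝ => (x:ℂ)), fun _ => ([] : List (Fin 5)))])
      (fun q u => evalA c s i q u + evalB c s j q u) P
    = fun w => P w + (fOut (runA c v i) w + fOut (runB c v j) w) := by
  intro v
  induction v with
  | nil =>
    intro i j P
    simp only [List.map_nil, List.nil_append]
    rw [qAccAux, qAccAux]
    funext w
    rw [end_sum c s hcs i j w]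
    show P w + (fOut i w + fOut j w) = _
    rfl
  | cons a v ih =>
    intro i j P
    simp only [List.map_cons, List.cons_append]
    rw [qAccAux]
    have h1 : (fun p w => if p ∈ nonS then qStepAmp (VC c s a, outC a)
        (fun q u => evalA c s i q u + evalB c s j q u) p w else 0)
        = fun q u => evalA c s (stepA c a i) q u + evalB c s (stepB c a j) q u := by
      funext p w
      rw [show (if p ∈ nonS then qStepAmp (VC c s a, outC a)
          (fun q u => evalA c s i q u + evalB c s j q u) p w else 0)
          = (if p ∈ nonS then qStepAmp (VC c s a, outC a) (evalA c s i) p w else 0)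
            + (if p ∈ nonS then qStepAmp (VC c s a, outC a) (evalB c s j) p w else 0) from by
        rw [qStepAmp_add]; exact ite_add_dist _ _ _]
      rw [stepA_eval c s hcs a i p w, stepB_eval c s hcs a j p w]
    have h2 : (fun w => P w + ∑ p ∈ accS, ‖qStepAmp (VC c s a, outC a)
        (fun q u => evalA c s i q u + evalB c s j q u) p w‖^2) = P := by
      funext w
      rw [acc_step_zero c s a i j w]
      ring
    rw [h1, h2, ih (stepA c a i) (stepB c a j) P]
    rfl

lemma prob_eq (c s : ℝ) (hcs : c^2 + s^2 = 1) (v : List (Fin 4)) (w : List (Fin 5)) :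
    (T c s hcs).prob v w
      = fOut (runA c v ⟨Ph.s, bb, 0⟩) w + fOut (runB c v ⟨Ph.s, bb, 0⟩) w := by
  show qAccAux accS nonS
      ((MB.map (fun x : ℝ => (x:ℂ)), fun _ => ([] : List (Fin 5))) ::
        ((v.map fun a => (VC c s a, outC a))
          ++ [((pm gE).map (fun x : ℝ => (x:ℂ)), fun _ => ([] : List (Fin 5)))]))
      (fun q u => if q = (0 : Fin 19) ∧ u = ([] : List (Fin 5)) then 1 else 0)
      (fun _ => 0) w = _
  rw [qAccAux]
  have hψ : (fun (q : Fin 19) (u : List (Fin 5)) => if q = (0 : Fin 19) ∧ u = ([] : List (Fin 5))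
      then (1:ℂ) else 0) = atom 0 [] 1 := by
    funext q u
    simp [atom]
  rw [hψ]
  have h1 : (fun p w => if p ∈ nonS then qStepAmp
      (MB.map (fun x : ℝ => (x:ℂ)), fun _ => ([] : List (Fin 5))) (atom 0 [] 1) p w else 0)
      = fun q u => evalA c s ⟨Ph.s, bb, 0⟩ q u + evalB c s ⟨Ph.s, bb, 0⟩ q u := by
    funext p w
    exact beg_eval c s p w
  have h2 : (fun w => (0:ℝ) + ∑ p ∈ accS, ‖qStepAmp
      (MB.map (fun x : ℝ => (x:ℂ)), fun _ => ([] : List (Fin 5))) (atom 0 [] 1) p w‖^2)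
      = fun _ => (0:ℝ) := by
    funext w
    rw [beg_acc w]
    ring
  rw [h1, h2, qacc_main c s hcs v ⟨Ph.s, bb, 0⟩ ⟨Ph.s, bb, 0⟩ (fun _ => 0)]
  ring

end QT

namespace QT

lemma runA_append (c : ℝ) (v : List (Fin 4)) (x : Fin 4) (b : BS) :
    runA c (v ++ [x]) b = stepA c x (runA c v b) := by
  simp [runA, List.foldl_append]

lemma runB_append (c : ℝ) (v : List (Fin 4)) (x : Fin 4) (b : BS) :
    runB c (v ++ [x]) b = stepB c x (runB c v b) := by
  simp [runB, List.foldl_append]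

lemma runA_rep0 (c : ℝ) (m : ℕ) (a : ℝ) (k : ℕ) :
    runA c (List.replicate m 0) ⟨Ph.s, a, k⟩ = ⟨Ph.s, a, k + m⟩ := by
  induction m generalizing k with
  | zero => simp [runA]
  | succ m ih =>
    rw [List.replicate_succ]
    show runA c (List.replicate m 0) (stepA c 0 ⟨Ph.s, a, k⟩) = _
    simp (config := { decide := true }) only [stepA, ite_true, ite_false]
    rw [ih]
    congr 1
    omega

lemma runA_rep1_w (c : ℝ) (n : ℕ) (a : ℝ) (k : ℕ) :
    runA c (List.replicate n 1) ⟨Ph.w, a, k⟩ = ⟨Ph.w, a, k⟩ := by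
  induction n with
  | zero => simp [runA]
  | succ n ih =>
    rw [List.replicate_succ]
    show runA c (List.replicate n 1) (stepA c 1 ⟨Ph.w, a, k⟩) = _
    simp (config := { decide := true }) only [stepA, ite_true, ite_false]
    rw [ih]

lemma runA_rep1 (c : ℝ) (n : ℕ) (a : ℝ) (k : ℕ) :
    runA c (List.replicate (n+1) 1) ⟨Ph.s, a, k⟩ = ⟨Ph.w, a*c, k⟩ := by
  rw [List.replicate_succ]
  show runA c (List.replicate n 1) (stepA c 1 ⟨Ph.s, a, k⟩) = _
  simp (config := { decide := true }) only [stepA, ite_true, ite_false]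
  rw [runA_rep1_w]

lemma runB_rep0 (c : ℝ) (m : ℕ) (a : ℝ) (k : ℕ) :
    runB c (List.replicate m 0) ⟨Ph.s, a, k⟩ = ⟨Ph.s, a, k⟩ := by
  induction m with
  | zero => simp [runB]
  | succ m ih =>
    rw [List.replicate_succ]
    show runB c (List.replicate m 0) (stepB c 0 ⟨Ph.s, a, k⟩) = _
    simp (config := { decide := true }) only [stepB, ite_true, ite_false]
    rw [ih]

lemma runB_rep1_w (c : ℝ) (n : ℕ) (a : ℝ) (k : ℕ) :
    runB c (List.replicate n 1) ⟨Ph.w, a, k⟩ = ⟨Ph.w, a, k + n⟩ := by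
  induction n generalizing k with
  | zero => simp [runB]
  | succ n ih =>
    rw [List.replicate_succ]
    show runB c (List.replicate n 1) (stepB c 1 ⟨Ph.w, a, k⟩) = _
    simp (config := { decide := true }) only [stepB, ite_true, ite_false]
    rw [ih]
    congr 1
    omega

lemma runB_rep1 (c : ℝ) (n : ℕ) (a : ℝ) (k : ℕ) :
    runB c (List.replicate (n+1) 1) ⟨Ph.s, a, k⟩ = ⟨Ph.w, a*c, k + n + 1⟩ := by
  rw [List.replicate_succ]
  show runB c (List.replicate n 1) (stepB c 1 ⟨Ph.s, a, k⟩) = _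
  simp (config := { decide := true }) only [stepB, ite_true, ite_false]
  rw [runB_rep1_w]
  congr 1
  omega

def InvA (c : ℝ) (v : List (Fin 4)) (b : BS) : Prop :=
  (∃ m, v = List.replicate m 0 ∧ b = ⟨Ph.s, bb, m⟩)
  ∨ (∃ m n, v = List.replicate m 0 ++ List.replicate (n+1) 1 ∧ b = ⟨Ph.w, bb*c, m⟩)
  ∨ (∃ m, v = List.replicate m 0 ++ [2] ∧ b = ⟨Ph.p1, bb, m⟩)
  ∨ (∃ m n, v = List.replicate m 0 ++ List.replicate (n+1) 1 ++ [2] ∧ b = ⟨Ph.p2, bb*c, m⟩)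
  ∨ (b.a^2 ≤ bb^2*c^4 ∧ ((b.ph = Ph.p1 ∨ b.ph = Ph.p2) → ∃ u, v = u ++ [2]))

def InvB (c : ℝ) (v : List (Fin 4)) (b : BS) : Prop :=
  (∃ m, v = List.replicate m 0 ∧ b = ⟨Ph.s, bb, 0⟩)
  ∨ (∃ m n, v = List.replicate m 0 ++ List.replicate (n+1) 1 ∧ b = ⟨Ph.w, bb*c, n+1⟩)
  ∨ (∃ m, v = List.replicate m 0 ++ [3] ∧ b = ⟨Ph.p1, bb, 0⟩)
  ∨ (∃ m n, v = List.replicate m 0 ++ List.replicate (n+1) 1 ++ [3] ∧ b = ⟨Ph.p2, bb*c, n+1⟩)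
  ∨ (b.a^2 ≤ bb^2*c^4 ∧ ((b.ph = Ph.p1 ∨ b.ph = Ph.p2) → ∃ u, v = u ++ [3]))

lemma bound_nonneg (c : ℝ) : 0 ≤ bb^2*c^4 := by positivity

lemma invA_holds (c : ℝ) (hc2 : c^2 ≤ 1) :
    ∀ v, InvA c v (runA c v ⟨Ph.s, bb, 0⟩) := by
  intro v
  induction v using List.reverseRecOn with
  | nil => exact Or.inl ⟨0, rfl, rfl⟩
  | append_singleton v x ih =>
    rw [runA_append]
    rcases ih with ⟨m, rfl, hb⟩ | ⟨m, n, rfl, hb⟩ | ⟨m, rfl, hb⟩ | ⟨m, n, rfl, hb⟩ | ⟨ha, hpend⟩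
    · rw [hb]
      rcases fin4_cases x with rfl | rfl | rfl | rfl
      · exact Or.inl ⟨m+1, by rw [List.replicate_succ'], by simp [stepA]⟩
      · refine Or.inr (Or.inl ⟨m, 0, rfl, by simp (config := { decide := true }) [stepA]⟩)
      · exact Or.inr (Or.inr (Or.inl ⟨m, rfl, by simp (config := { decide := true }) [stepA]⟩))
      · refine Or.inr (Or.inr (Or.inr (Or.inr ⟨?_, ?_⟩)))
        · simp (config := { decide := true }) [stepA, bound_nonneg c]
        · simp (config := { decide := true }) [stepA]
    · rw [hb]
      rcases fin4_cases x with rfl | rfl | rfl | rfl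
      · refine Or.inr (Or.inr (Or.inr (Or.inr ⟨?_, ?_⟩)))
        · simp (config := { decide := true }) [stepA]
          exact le_of_eq (by ring)
        · simp (config := { decide := true }) [stepA]
      · refine Or.inr (Or.inl ⟨m, n+1, ?_, by simp (config := { decide := true }) [stepA]⟩)
        rw [List.append_assoc, ← List.replicate_succ' (n := n+1) (a := 1)]
      · exact Or.inr (Or.inr (Or.inr (Or.inl ⟨m, n, rfl,
          by simp (config := { decide := true }) [stepA]⟩)))
      · refine Or.inr (Or.inr (Or.inr (Or.inr ⟨?_, ?_⟩)))
        · simp (config := { decide := true }) [stepA, bound_nonneg c]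
        · simp (config := { decide := true }) [stepA]
    · rw [hb]
      refine Or.inr (Or.inr (Or.inr (Or.inr ⟨?_, ?_⟩)))
      · rcases fin4_cases x with rfl | rfl | rfl | rfl <;>
          simp (config := { decide := true }) [stepA, bound_nonneg c]
      · rcases fin4_cases x with rfl | rfl | rfl | rfl <;>
          simp (config := { decide := true }) [stepA]
    · rw [hb]
      refine Or.inr (Or.inr (Or.inr (Or.inr ⟨?_, ?_⟩)))
      · rcases fin4_cases x with rfl | rfl | rfl | rfl <;>
          simp (config := { decide := true }) [stepA, bound_nonneg c]
      · rcases fin4_cases x with rfl | rfl | rfl | rfl <;>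
          simp (config := { decide := true }) [stepA]
    · rcases hB : runA c v ⟨Ph.s, bb, 0⟩ with ⟨ph, a, k⟩
      rw [hB] at ha hpend
      dsimp only at ha hpend
      refine Or.inr (Or.inr (Or.inr (Or.inr ⟨?_, ?_⟩)))
      · rcases fin4_cases x with rfl | rfl | rfl | rfl <;> cases ph <;>
          simp (config := { decide := true }) [stepA, bound_nonneg c] <;>
          first
            | exact ha
            | nlinarith [ha, hc2, sq_nonneg c, sq_nonneg a, bound_nonneg c]
      · rcases fin4_cases x with rfl | rfl | rfl | rfl <;> cases ph <;>
          simp (config := { decide := true }) [stepA] <;> exact ⟨v, rfl⟩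

lemma invB_holds (c : ℝ) (hc2 : c^2 ≤ 1) :
    ∀ v, InvB c v (runB c v ⟨Ph.s, bb, 0⟩) := by
  intro v
  induction v using List.reverseRecOn with
  | nil => exact Or.inl ⟨0, rfl, rfl⟩
  | append_singleton v x ih =>
    rw [runB_append]
    rcases ih with ⟨m, rfl, hb⟩ | ⟨m, n, rfl, hb⟩ | ⟨m, rfl, hb⟩ | ⟨m, n, rfl, hb⟩ | ⟨ha, hpend⟩
    · rw [hb]
      rcases fin4_cases x with rfl | rfl | rfl | rfl
      · exact Or.inl ⟨m+1, by rw [List.replicate_succ'],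
          by simp (config := { decide := true }) [stepB]⟩
      · refine Or.inr (Or.inl ⟨m, 0, rfl, by simp (config := { decide := true }) [stepB]⟩)
      · refine Or.inr (Or.inr (Or.inr (Or.inr ⟨?_, ?_⟩)))
        · simp (config := { decide := true }) [stepB, bound_nonneg c]
        · simp (config := { decide := true }) [stepB]
      · exact Or.inr (Or.inr (Or.inl ⟨m, rfl, by simp (config := { decide := true }) [stepB]⟩))
    · rw [hb]
      rcases fin4_cases x with rfl | rfl | rfl | rfl
      · refine Or.inr (Or.inr (Or.inr (Or.inr ⟨?_, ?_⟩)))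
        · simp (config := { decide := true }) [stepB]
          exact le_of_eq (by ring)
        · simp (config := { decide := true }) [stepB]
      · refine Or.inr (Or.inl ⟨m, n+1, ?_, by simp (config := { decide := true }) [stepB]⟩)
        rw [List.append_assoc, ← List.replicate_succ' (n := n+1) (a := 1)]
      · refine Or.inr (Or.inr (Or.inr (Or.inr ⟨?_, ?_⟩)))
        · simp (config := { decide := true }) [stepB, bound_nonneg c]
        · simp (config := { decide := true }) [stepB]
      · exact Or.inr (Or.inr (Or.inr (Or.inl ⟨m, n, rfl,
          by simp (config := { decide := true }) [stepB]⟩)))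
    · rw [hb]
      refine Or.inr (Or.inr (Or.inr (Or.inr ⟨?_, ?_⟩)))
      · rcases fin4_cases x with rfl | rfl | rfl | rfl <;>
          simp (config := { decide := true }) [stepB, bound_nonneg c]
      · rcases fin4_cases x with rfl | rfl | rfl | rfl <;>
          simp (config := { decide := true }) [stepB]
    · rw [hb]
      refine Or.inr (Or.inr (Or.inr (Or.inr ⟨?_, ?_⟩)))
      · rcases fin4_cases x with rfl | rfl | rfl | rfl <;>
          simp (config := { decide := true }) [stepB, bound_nonneg c]
      · rcases fin4_cases x with rfl | rfl | rfl | rfl <;>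
          simp (config := { decide := true }) [stepB]
    · rcases hB : runB c v ⟨Ph.s, bb, 0⟩ with ⟨ph, a, k⟩
      rw [hB] at ha hpend
      dsimp only at ha hpend
      refine Or.inr (Or.inr (Or.inr (Or.inr ⟨?_, ?_⟩)))
      · rcases fin4_cases x with rfl | rfl | rfl | rfl <;> cases ph <;>
          simp (config := { decide := true }) [stepB, bound_nonneg c] <;>
          first
            | exact ha
            | nlinarith [ha, hc2, sq_nonneg c, sq_nonneg a, bound_nonneg c]
      · rcases fin4_cases x with rfl | rfl | rfl | rfl <;> cases ph <;>
          simp (config := { decide := true }) [stepB] <;> exact ⟨v, rfl⟩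

end QT

namespace QT

lemma runA_app (c : ℝ) (v1 v2 : List (Fin 4)) (b : BS) :
    runA c (v1 ++ v2) b = runA c v2 (runA c v1 b) := by
  simp [runA, List.foldl_append]

lemma runB_app (c : ℝ) (v1 v2 : List (Fin 4)) (b : BS) :
    runB c (v1 ++ v2) b = runB c v2 (runB c v1 b) := by
  simp [runB, List.foldl_append]

lemma fOut_nonneg (b : BS) (w : List (Fin 5)) : 0 ≤ fOut b w := by
  unfold fOut
  split
  · positivity
  · exact le_refl 0
  
lemma fOut_ne (b : BS) (w : List (Fin 5)) (h : fOut b w ≠ 0) :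
    (b.ph = Ph.p1 ∨ b.ph = Ph.p2) ∧ w = List.replicate b.k 4 ∧ fOut b w = b.a^2 := by
  by_cases hc : (b.ph = Ph.p1 ∨ b.ph = Ph.p2) ∧ w = List.replicate b.k 4
  · exact ⟨hc.1, hc.2, by unfold fOut; rw [if_pos hc]⟩
  · exact absurd (by unfold fOut; rw [if_neg hc]) h

lemma fOut_le (b : BS) (w : List (Fin 5)) (X : ℝ) (hb : b.a^2 ≤ X) (hX : 0 ≤ X) :
    fOut b w ≤ X := by
  unfold fOut
  split
  · exact hb
  · exact hX

end QT

/-- For every `α` with `0 < α < 1/2` there is a quantum finite state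
transducer computing `R₄` with isolated cutpoint `α` (so the cutpoint can be
taken arbitrarily close to `1/2`). -/
theorem qfst_computes_R₄_cutpoint (α : ℝ) (h0 : 0 < α) (h1 : α < 1/2) :
    ∃ (n : ℕ) (T : QFST (Fin n) (Fin 4) (Fin 5)), T.ComputesCutpoint R₄ α := by
  have h2a : 0 < 1 - 2*α := by linarith
  set ε : ℝ := α*(1-2*α)/8 with hεdef
  have hε : 0 < ε := by positivity
  have hαε1 : 2*(α+ε) ≤ 1 := by
    nlinarith [mul_nonneg (by nlinarith : (0:ℝ) ≤ 1-2*α) (by nlinarith : (0:ℝ) ≤ 1 - α/4)]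
  have hquad : (0:ℝ) ≤ 2*α^2-17*α+28 := by nlinarith [sq_nonneg α]
  have hkey : 2*(α+ε)^2 ≤ α - ε := by
    nlinarith [mul_nonneg (mul_nonneg h0.le h2a.le) hquad]
  set c : ℝ := Real.sqrt (2*(α+ε)) with hcdef
  set s : ℝ := Real.sqrt (1-2*(α+ε)) with hsdef
  have hc2 : c^2 = 2*(α+ε) := Real.sq_sqrt (by positivity)
  have hs2 : s^2 = 1-2*(α+ε) := Real.sq_sqrt (by linarith)
  have hcs : c^2+s^2 = 1 := by rw [hc2, hs2]; ring
  have hc2le : c^2 ≤ 1 := by rw [hc2]; linarith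
  have hbb : QT.bb^2 = 1/2 := QT.bb_sq
  have hbound : QT.bb^2*c^4 ≤ α-ε := by
    have h4 : c^4 = (c^2)^2 := by ring
    rw [h4, hc2, hbb]
    nlinarith [hkey]
  have hα_ε0 : 0 ≤ α - ε := le_trans (QT.bound_nonneg c) hbound
  refine ⟨19, QT.T c s hcs, ε, hε, ?_⟩
  intro v w
  have hprob := QT.prob_eq c s hcs v w
  constructor
  · -- membership: lower bound
    rintro ⟨m, n, l, aa, haa, h2c, h3c, hv, hw⟩
    simp only at hv hw
    rcases haa with rfl | rfl
    · have hl : l = m := h2c rfl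
      rw [hl] at hw
      subst hv hw
      rw [hprob, QT.runA_app, QT.runA_app, QT.runA_rep0, QT.runB_app, QT.runB_app,
        QT.runB_rep0, Nat.zero_add]
      cases n with
      | zero =>
        have e1 : QT.runA c [2] (QT.runA c (List.replicate 0 1) ⟨QT.Ph.s, QT.bb, m⟩)
            = ⟨QT.Ph.p1, QT.bb, m⟩ := by
          simp (config := { decide := true }) [QT.runA, QT.stepA]
        have e2 : QT.runB c [2] (QT.runB c (List.replicate 0 1) ⟨QT.Ph.s, QT.bb, 0⟩)
            = ⟨QT.Ph.d, 0, 0⟩ := by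
          simp (config := { decide := true }) [QT.runB, QT.stepB]
        rw [e1, e2]
        simp [QT.fOut]
        nlinarith [hbb]
      | succ n =>
        rw [QT.runA_rep1, QT.runB_rep1]
        have e1 : QT.runA c [2] ⟨QT.Ph.w, QT.bb*c, m⟩ = ⟨QT.Ph.p2, QT.bb*c, m⟩ := by
          simp (config := { decide := true }) [QT.runA, QT.stepA]
        have e2 : QT.runB c [2] ⟨QT.Ph.w, QT.bb*c, 0+n+1⟩ = ⟨QT.Ph.d, 0, 0⟩ := by
          simp (config := { decide := true }) [QT.runB, QT.stepB]
        rw [e1, e2]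
        simp [QT.fOut]
        nlinarith [hbb, hc2]
    · have hl : l = n := h3c rfl
      rw [hl] at hw
      subst hv hw
      rw [hprob, QT.runA_app, QT.runA_app, QT.runA_rep0, QT.runB_app, QT.runB_app,
        QT.runB_rep0, Nat.zero_add]
      cases n with
      | zero =>
        have e1 : QT.runA c [3] (QT.runA c (List.replicate 0 1) ⟨QT.Ph.s, QT.bb, m⟩)
            = ⟨QT.Ph.d, 0, 0⟩ := by
          simp (config := { decide := true }) [QT.runA, QT.stepA]
        have e2 : QT.runB c [3] (QT.runB c (List.replicate 0 1) ⟨QT.Ph.s, QT.bb, 0⟩)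
            = ⟨QT.Ph.p1, QT.bb, 0⟩ := by
          simp (config := { decide := true }) [QT.runB, QT.stepB]
        rw [e1, e2]
        simp [QT.fOut]
        nlinarith [hbb]
      | succ n =>
        rw [QT.runA_rep1, QT.runB_rep1]
        have e1 : QT.runA c [3] ⟨QT.Ph.w, QT.bb*c, m⟩ = ⟨QT.Ph.d, 0, 0⟩ := by
          simp (config := { decide := true }) [QT.runA, QT.stepA]
        have e2 : QT.runB c [3] ⟨QT.Ph.w, QT.bb*c, 0+n+1⟩
            = ⟨QT.Ph.p2, QT.bb*c, 0+n+1⟩ := by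
          simp (config := { decide := true }) [QT.runB, QT.stepB]
        rw [e1, e2]
        simp [QT.fOut, Nat.zero_add]
        nlinarith [hbb, hc2]
  · -- non-membership: upper bound
    intro hnm
    rw [hprob]
    by_cases hA : QT.fOut (QT.runA c v ⟨QT.Ph.s, QT.bb, 0⟩) w = 0
    · by_cases hB : QT.fOut (QT.runB c v ⟨QT.Ph.s, QT.bb, 0⟩) w = 0
      · rw [hA, hB]
        linarith
      · obtain ⟨hph, hwB, hval⟩ := QT.fOut_ne _ _ hB
        rcases QT.invB_holds c hc2le v with ⟨m, hv, hb⟩ | ⟨m, n, hv, hb⟩ | ⟨m, hv, hb⟩ |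
          ⟨m, n, hv, hb⟩ | ⟨ha, hpend⟩
        · rw [hb] at hph
          simp at hph
        · rw [hb] at hph
          simp at hph
        · exfalso
          apply hnm
          refine ⟨m, 0, 0, 3, Or.inr rfl, fun h => absurd h (by decide), fun _ => rfl, ?_, ?_⟩
          · rw [hv]
            simp
          · rw [hwB, hb]
        · exfalso
          apply hnm
          refine ⟨m, n+1, n+1, 3, Or.inr rfl, fun h => absurd h (by decide), fun _ => rfl, ?_, ?_⟩
          · rw [hv]
          · rw [hwB, hb]
        · rw [hA, zero_add]
          exact le_trans (QT.fOut_le _ _ _ ha (QT.bound_nonneg c)) hbound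
    · by_cases hB : QT.fOut (QT.runB c v ⟨QT.Ph.s, QT.bb, 0⟩) w = 0
      · obtain ⟨hph, hwA, hval⟩ := QT.fOut_ne _ _ hA
        rcases QT.invA_holds c hc2le v with ⟨m, hv, hb⟩ | ⟨m, n, hv, hb⟩ | ⟨m, hv, hb⟩ |
          ⟨m, n, hv, hb⟩ | ⟨ha, hpend⟩
        · rw [hb] at hph
          simp at hph
        · rw [hb] at hph
          simp at hph
        · exfalso
          apply hnm
          refine ⟨m, 0, m, 2, Or.inl rfl, fun _ => rfl, fun h => absurd h (by decide), ?_, ?_⟩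
          · rw [hv]
            simp
          · rw [hwA, hb]
        · exfalso
          apply hnm
          refine ⟨m, n+1, m, 2, Or.inl rfl, fun _ => rfl, fun h => absurd h (by decide), ?_, ?_⟩
          · rw [hv]
          · rw [hwA, hb]
        · rw [hB, add_zero]
          exact le_trans (QT.fOut_le _ _ _ ha (QT.bound_nonneg c)) hbound
      · exfalso
        obtain ⟨hphA, -, -⟩ := QT.fOut_ne _ _ hA
        obtain ⟨hphB, -, -⟩ := QT.fOut_ne _ _ hB
        have endA : ∃ u, v = u ++ [2] := by
          rcases QT.invA_holds c hc2le v with ⟨m, hv, hb⟩ | ⟨m, n, hv, hb⟩ | ⟨m, hv, hb⟩ |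
            ⟨m, n, hv, hb⟩ | ⟨ha, hpend⟩
          · rw [hb] at hphA
            simp at hphA
          · rw [hb] at hphA
            simp at hphA
          · exact ⟨List.replicate m 0, hv⟩
          · exact ⟨List.replicate m 0 ++ List.replicate (n+1) 1, by rw [hv, List.append_assoc]⟩
          · exact hpend hphA
        have endB : ∃ u, v = u ++ [3] := by
          rcases QT.invB_holds c hc2le v with ⟨m, hv, hb⟩ | ⟨m, n, hv, hb⟩ | ⟨m, hv, hb⟩ |
            ⟨m, n, hv, hb⟩ | ⟨ha, hpend⟩
          · rw [hb] at hphB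
            simp at hphB
          · rw [hb] at hphB
            simp at hphB
          · exact ⟨List.replicate m 0, hv⟩
          · exact ⟨List.replicate m 0 ++ List.replicate (n+1) 1, by rw [hv, List.append_assoc]⟩
          · exact hpend hphB
        obtain ⟨u, hu⟩ := endA
        obtain ⟨u', hu'⟩ := endB
        have hlast : (u ++ [(2:Fin 4)]).getLast? = (u' ++ [(3:Fin 4)]).getLast? := by
          rw [← hu, ← hu']
        rw [List.getLast?_concat, List.getLast?_concat] at hlast
        exact absurd (Option.some.inj hlast) (by decide)
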